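/- arXiv:1306.2387 — 4 statements merged into one kernel-verified Lean document; each statement's English description precedes it below -/
import Mathlib

section
/- Any two 1-factorisations of the complete graph K_6 have a perfect matching in common; equivalently, there do not exist two 1-factorisations of K_6 that are disjoint as sets of perfect matchings. -/
open SimpleGraph

/-- A 1-factorisation of `K₆`: a set of 5 perfect matchings partitioning the edge set. -/
def IsOneFactorisation (F : Finset ((⊤ : SimpleGraph (Fin 6)).Subgraph)) : Prop :=
  F.card = 5 ∧ (∀ M ∈ F, M.IsPerfectMatching) ∧
    (∀ M ∈ F, ∀ N ∈ F, M ≠ N → Disjoint M.edgeSet N.edgeSet) ∧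
    (⋃ M ∈ F, M.edgeSet) = (⊤ : SimpleGraph (Fin 6)).edgeSet

namespace OFAux

set_option maxRecDepth 100000
set_option maxHeartbeats 8000000

def M15 : Fin 15 → Fin 6 → Fin 6 :=
  ![![1,0,3,2,5,4], ![1,0,4,5,2,3], ![1,0,5,4,3,2], ![2,3,0,1,5,4], ![2,4,0,5,1,3],
    ![2,5,0,4,3,1], ![3,2,1,0,5,4], ![3,4,5,0,1,2], ![3,5,4,0,2,1], ![4,2,1,5,0,3],
    ![4,3,5,1,0,2], ![4,5,3,2,0,1], ![5,2,1,4,3,0], ![5,3,4,1,2,0], ![5,4,3,2,1,0]]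

def Cover (s : Finset (Fin 15)) : Prop := ∀ v w : Fin 6, v ≠ w → ∃ i ∈ s, M15 i v = w

instance : DecidablePred Cover := fun s => by unfold Cover; infer_instance

lemma eq6 : ∀ x : Fin 6, x = 0 ∨ x = 1 ∨ x = 2 ∨ x = 3 ∨ x = 4 ∨ x = 5 := by decide

lemma leaf (p : Fin 6 → Fin 6) (hne : ∀ v, p v ≠ v) (hinv : ∀ v, p (p v) = v)
    (a m b x y : Fin 6) (i : Fin 15)
    (hxa : x ≠ a) (hx0 : x ≠ 0) (hxm : x ≠ m) (hxb : x ≠ b)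
    (hexh : ∀ z : Fin 6, z = 0 ∨ z = a ∨ z = m ∨ z = b ∨ z = x ∨ z = y)
    (hM : M15 i 0 = a ∧ M15 i a = 0 ∧ M15 i m = b ∧ M15 i b = m ∧ M15 i x = y ∧ M15 i y = x)
    (h1 : p 0 = a) (h2 : p m = b) :
    ∀ v, M15 i v = p v := by
  have inj : ∀ s t : Fin 6, p s = p t → s = t := fun s t h => by
    rw [← hinv s, h, hinv t]
  have h3 : p a = 0 := by rw [← h1, hinv]
  have h4 : p b = m := by rw [← h2, hinv]
  have hx : p x = y := by
    rcases hexh (p x) with h|h|h|h|h|h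
    · exact absurd (inj x a (by rw [h, h3])) hxa
    · exact absurd (inj x 0 (by rw [h, h1])) hx0
    · exact absurd (inj x b (by rw [h, h4])) hxb
    · exact absurd (inj x m (by rw [h, h2])) hxm
    · exact absurd h (hne x)
    · exact h
  have hy : p y = x := by rw [← hx, hinv]
  intro v
  rcases hexh v with rfl|rfl|rfl|rfl|rfl|rfl
  · exact hM.1.trans h1.symm
  · exact hM.2.1.trans h3.symm
  · exact hM.2.2.1.trans h2.symm
  · exact hM.2.2.2.1.trans h4.symm
  · exact hM.2.2.2.2.1.trans hx.symm
  · exact hM.2.2.2.2.2.trans hy.symm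

lemma invol_mem (p : Fin 6 → Fin 6) (hne : ∀ v, p v ≠ v) (hinv : ∀ v, p (p v) = v) :
    ∃ i : Fin 15, ∀ v, M15 i v = p v := by
  rcases eq6 (p 0) with h1|h1|h1|h1|h1|h1
  · exact absurd h1 (hne 0)
  · -- p 0 = 1
    have h3 : p 1 = 0 := by rw [← h1, hinv]
    rcases eq6 (p 2) with h2|h2|h2|h2|h2|h2
    · have := hinv 2; rw [h2, h1] at this; exact absurd this (by decide)
    · have := hinv 2; rw [h2] at this; exact absurd (this.symm.trans h3) (by decide)
    · exact absurd h2 (hne 2)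
    · exact ⟨0, leaf p hne hinv 1 2 3 4 5 0 (by decide) (by decide) (by decide) (by decide) (by decide) ⟨by decide, by decide, by decide, by decide, by decide, by decide⟩ h1 h2⟩
    · exact ⟨1, leaf p hne hinv 1 2 4 3 5 1 (by decide) (by decide) (by decide) (by decide) (by decide) ⟨by decide, by decide, by decide, by decide, by decide, by decide⟩ h1 h2⟩
    · exact ⟨2, leaf p hne hinv 1 2 5 3 4 2 (by decide) (by decide) (by decide) (by decide) (by decide) ⟨by decide, by decide, by decide, by decide, by decide, by decide⟩ h1 h2⟩
  · -- p 0 = 2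
    have h3 : p 2 = 0 := by rw [← h1, hinv]
    rcases eq6 (p 1) with h2|h2|h2|h2|h2|h2
    · have := hinv 1; rw [h2, h1] at this; exact absurd this (by decide)
    · exact absurd h2 (hne 1)
    · have := hinv 1; rw [h2] at this; exact absurd (this.symm.trans h3) (by decide)
    · exact ⟨3, leaf p hne hinv 2 1 3 4 5 3 (by decide) (by decide) (by decide) (by decide) (by decide) ⟨by decide, by decide, by decide, by decide, by decide, by decide⟩ h1 h2⟩
    · exact ⟨4, leaf p hne hinv 2 1 4 3 5 4 (by decide) (by decide) (by decide) (by decide) (by decide) ⟨by decide, by decide, by decide, by decide, by decide, by decide⟩ h1 h2⟩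
    · exact ⟨5, leaf p hne hinv 2 1 5 3 4 5 (by decide) (by decide) (by decide) (by decide) (by decide) ⟨by decide, by decide, by decide, by decide, by decide, by decide⟩ h1 h2⟩
  · -- p 0 = 3
    have h3 : p 3 = 0 := by rw [← h1, hinv]
    rcases eq6 (p 1) with h2|h2|h2|h2|h2|h2
    · have := hinv 1; rw [h2, h1] at this; exact absurd this (by decide)
    · exact absurd h2 (hne 1)
    · exact ⟨6, leaf p hne hinv 3 1 2 4 5 6 (by decide) (by decide) (by decide) (by decide) (by decide) ⟨by decide, by decide, by decide, by decide, by decide, by decide⟩ h1 h2⟩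
    · have := hinv 1; rw [h2] at this; exact absurd (this.symm.trans h3) (by decide)
    · exact ⟨7, leaf p hne hinv 3 1 4 2 5 7 (by decide) (by decide) (by decide) (by decide) (by decide) ⟨by decide, by decide, by decide, by decide, by decide, by decide⟩ h1 h2⟩
    · exact ⟨8, leaf p hne hinv 3 1 5 2 4 8 (by decide) (by decide) (by decide) (by decide) (by decide) ⟨by decide, by decide, by decide, by decide, by decide, by decide⟩ h1 h2⟩
  · -- p 0 = 4
    have h3 : p 4 = 0 := by rw [← h1, hinv]
    rcases eq6 (p 1) with h2|h2|h2|h2|h2|h2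
    · have := hinv 1; rw [h2, h1] at this; exact absurd this (by decide)
    · exact absurd h2 (hne 1)
    · exact ⟨9, leaf p hne hinv 4 1 2 3 5 9 (by decide) (by decide) (by decide) (by decide) (by decide) ⟨by decide, by decide, by decide, by decide, by decide, by decide⟩ h1 h2⟩
    · exact ⟨10, leaf p hne hinv 4 1 3 2 5 10 (by decide) (by decide) (by decide) (by decide) (by decide) ⟨by decide, by decide, by decide, by decide, by decide, by decide⟩ h1 h2⟩
    · have := hinv 1; rw [h2] at this; exact absurd (this.symm.trans h3) (by decide)
    · exact ⟨11, leaf p hne hinv 4 1 5 2 3 11 (by decide) (by decide) (by decide) (by decide) (by decide) ⟨by decide, by decide, by decide, by decide, by decide, by decide⟩ h1 h2⟩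
  · -- p 0 = 5
    have h3 : p 5 = 0 := by rw [← h1, hinv]
    rcases eq6 (p 1) with h2|h2|h2|h2|h2|h2
    · have := hinv 1; rw [h2, h1] at this; exact absurd this (by decide)
    · exact absurd h2 (hne 1)
    · exact ⟨12, leaf p hne hinv 5 1 2 3 4 12 (by decide) (by decide) (by decide) (by decide) (by decide) ⟨by decide, by decide, by decide, by decide, by decide, by decide⟩ h1 h2⟩
    · exact ⟨13, leaf p hne hinv 5 1 3 2 4 13 (by decide) (by decide) (by decide) (by decide) (by decide) ⟨by decide, by decide, by decide, by decide, by decide, by decide⟩ h1 h2⟩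
    · exact ⟨14, leaf p hne hinv 5 1 4 2 3 14 (by decide) (by decide) (by decide) (by decide) (by decide) ⟨by decide, by decide, by decide, by decide, by decide, by decide⟩ h1 h2⟩
    · have := hinv 1; rw [h2] at this; exact absurd (this.symm.trans h3) (by decide)

lemma groups : ∀ i : Fin 15,
    (M15 i 0 = 1 → i ∈ ({0,1,2} : Finset (Fin 15))) ∧
    (M15 i 0 = 2 → i ∈ ({3,4,5} : Finset (Fin 15))) ∧
    (M15 i 0 = 3 → i ∈ ({6,7,8} : Finset (Fin 15))) ∧
    (M15 i 0 = 4 → i ∈ ({9,10,11} : Finset (Fin 15))) ∧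
    (M15 i 0 = 5 → i ∈ ({12,13,14} : Finset (Fin 15))) := by decide

lemma key : ∀ a ∈ ({0,1,2} : Finset (Fin 15)), ∀ b ∈ ({3,4,5} : Finset (Fin 15)),
    ∀ c ∈ ({6,7,8} : Finset (Fin 15)), ∀ d ∈ ({9,10,11} : Finset (Fin 15)),
    ∀ e ∈ ({12,13,14} : Finset (Fin 15)), Cover {a,b,c,d,e} →
    ({a,b,c,d,e} : Finset (Fin 15)) = {0,4,8,10,12} ∨ ({a,b,c,d,e} : Finset (Fin 15)) = {0,5,7,9,13} ∨
    ({a,b,c,d,e} : Finset (Fin 15)) = {1,3,7,11,12} ∨ ({a,b,c,d,e} : Finset (Fin 15)) = {1,5,6,10,14} ∨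
    ({a,b,c,d,e} : Finset (Fin 15)) = {2,3,8,9,14} ∨ ({a,b,c,d,e} : Finset (Fin 15)) = {2,4,6,11,13} := by
  decide

lemma classify (s : Finset (Fin 15)) (h5 : s.card = 5) (hc : Cover s) :
    s = {0,4,8,10,12} ∨ s = {0,5,7,9,13} ∨ s = {1,3,7,11,12} ∨ s = {1,5,6,10,14} ∨ s = {2,3,8,9,14} ∨ s = {2,4,6,11,13} := by
  obtain ⟨a, ha, ha0⟩ := hc 0 1 (by decide)
  obtain ⟨b, hb, hb0⟩ := hc 0 2 (by decide)
  obtain ⟨c, hcm, hc0⟩ := hc 0 3 (by decide)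
  obtain ⟨d, hd, hd0⟩ := hc 0 4 (by decide)
  obtain ⟨e, he, he0⟩ := hc 0 5 (by decide)
  have hab : a ≠ b := fun h => by rw [h] at ha0; exact absurd (ha0.symm.trans hb0) (by decide)
  have hac : a ≠ c := fun h => by rw [h] at ha0; exact absurd (ha0.symm.trans hc0) (by decide)
  have had : a ≠ d := fun h => by rw [h] at ha0; exact absurd (ha0.symm.trans hd0) (by decide)
  have hae : a ≠ e := fun h => by rw [h] at ha0; exact absurd (ha0.symm.trans he0) (by decide)
  have hbc : b ≠ c := fun h => by rw [h] at hb0; exact absurd (hb0.symm.trans hc0) (by decide)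
  have hbd : b ≠ d := fun h => by rw [h] at hb0; exact absurd (hb0.symm.trans hd0) (by decide)
  have hbe : b ≠ e := fun h => by rw [h] at hb0; exact absurd (hb0.symm.trans he0) (by decide)
  have hcd : c ≠ d := fun h => by rw [h] at hc0; exact absurd (hc0.symm.trans hd0) (by decide)
  have hce : c ≠ e := fun h => by rw [h] at hc0; exact absurd (hc0.symm.trans he0) (by decide)
  have hde : d ≠ e := fun h => by rw [h] at hd0; exact absurd (hd0.symm.trans he0) (by decide)
  have hcard : ({a,b,c,d,e} : Finset (Fin 15)).card = 5 := by
    rw [Finset.card_insert_of_notMem (by simp [hab, hac, had, hae]),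
        Finset.card_insert_of_notMem (by simp [hbc, hbd, hbe]),
        Finset.card_insert_of_notMem (by simp [hcd, hce]),
        Finset.card_insert_of_notMem (by simp [hde]), Finset.card_singleton]
  have hsub : ({a,b,c,d,e} : Finset (Fin 15)) ⊆ s := by
    intro z hz
    simp only [Finset.mem_insert, Finset.mem_singleton] at hz
    rcases hz with rfl|rfl|rfl|rfl|rfl
    exacts [ha, hb, hcm, hd, he]
  have heq : ({a,b,c,d,e} : Finset (Fin 15)) = s :=
    Finset.eq_of_subset_of_card_le hsub (by rw [hcard, h5])
  rw [← heq]
  rw [← heq] at hc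
  exact key a ((groups a).1 ha0) b ((groups b).2.1 hb0) c ((groups c).2.2.1 hc0)
    d ((groups d).2.2.2.1 hd0) e ((groups e).2.2.2.2 he0) hc

lemma core (s₁ s₂ : Finset (Fin 15)) (h1 : s₁.card = 5) (c1 : Cover s₁)
    (h2 : s₂.card = 5) (c2 : Cover s₂) : (s₁ ∩ s₂).Nonempty := by
  rcases classify s₁ h1 c1 with h|h|h|h|h|h <;> rcases classify s₂ h2 c2 with h'|h'|h'|h'|h'|h' <;>
    subst h <;> subst h' <;> decide

lemma exists_partner (M : (⊤ : SimpleGraph (Fin 6)).Subgraph) (hM : M.IsPerfectMatching) :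
    ∃ p : Fin 6 → Fin 6, ∀ v w, M.Adj v w ↔ p v = w := by
  choose p hp hu using fun v => hM.1 (hM.2 v)
  exact ⟨p, fun v w => ⟨fun h => (hu v w h).symm, fun h => h ▸ hp v⟩⟩

lemma pm_index (M : (⊤ : SimpleGraph (Fin 6)).Subgraph) (hM : M.IsPerfectMatching) :
    ∃ i : Fin 15, ∀ v w, M.Adj v w ↔ M15 i v = w := by
  obtain ⟨p, hp⟩ := exists_partner M hM
  have hadj : ∀ v, M.Adj v (p v) := fun v => (hp v (p v)).mpr rfl
  have hne : ∀ v, p v ≠ v := fun v h => (M.adj_sub (h ▸ hadj v)).ne rfl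
  have hinv : ∀ v, p (p v) = v := fun v => (hp (p v) v).mp (hadj v).symm
  obtain ⟨i, hi⟩ := invol_mem p hne hinv
  exact ⟨i, fun v w => by rw [hp v w, hi v]⟩

open Classical in
noncomputable def idx (M : (⊤ : SimpleGraph (Fin 6)).Subgraph) : Fin 15 :=
  if h : ∃ i : Fin 15, ∀ v w, M.Adj v w ↔ M15 i v = w then h.choose else 0

lemma idx_spec {M : (⊤ : SimpleGraph (Fin 6)).Subgraph} (hM : M.IsPerfectMatching) :
    ∀ v w, M.Adj v w ↔ M15 (idx M) v = w := by
  have h := pm_index M hM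
  unfold idx
  rw [dif_pos h]
  exact h.choose_spec

lemma pm_eq {M N : (⊤ : SimpleGraph (Fin 6)).Subgraph}
    (hM : M.IsPerfectMatching) (hN : N.IsPerfectMatching)
    (h : idx M = idx N) : M = N := by
  apply SimpleGraph.Subgraph.ext
  · exact (Set.eq_univ_of_forall hM.2).trans (Set.eq_univ_of_forall hN.2).symm
  · funext v w
    exact propext ((idx_spec hM v w).trans (h ▸ (idx_spec hN v w)).symm)

lemma cover_image {F : Finset ((⊤ : SimpleGraph (Fin 6)).Subgraph)}
    (hpm : ∀ M ∈ F, M.IsPerfectMatching)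
    (hcov : (⋃ M ∈ F, M.edgeSet) = (⊤ : SimpleGraph (Fin 6)).edgeSet) :
    Cover (F.image idx) := by
  intro v w hvw
  have hmem : s(v, w) ∈ (⊤ : SimpleGraph (Fin 6)).edgeSet := by
    rw [SimpleGraph.mem_edgeSet]; exact hvw
  rw [← hcov] at hmem
  simp only [Set.mem_iUnion] at hmem
  obtain ⟨M, hMF, hMe⟩ := hmem
  exact ⟨idx M, Finset.mem_image_of_mem idx hMF,
    (idx_spec (hpm M hMF) v w).mp (SimpleGraph.Subgraph.mem_edgeSet.mp hMe)⟩

lemma card_image {F : Finset ((⊤ : SimpleGraph (Fin 6)).Subgraph)}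
    (hc : F.card = 5) (hpm : ∀ M ∈ F, M.IsPerfectMatching) :
    (F.image idx).card = 5 := by
  rw [Finset.card_image_of_injOn fun M hM N hN h => pm_eq (hpm M hM) (hpm N hN) h]
  exact hc

end OFAux

/-- Any two 1-factorisations of `K₆` have a perfect matching in common. -/
theorem oneFactorisations_not_disjoint
    (F₁ F₂ : Finset ((⊤ : SimpleGraph (Fin 6)).Subgraph))
    (h₁ : IsOneFactorisation F₁) (h₂ : IsOneFactorisation F₂) :
    ∃ M, M ∈ F₁ ∧ M ∈ F₂ := by
  obtain ⟨hc₁, hpm₁, -, hcov₁⟩ := h₁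
  obtain ⟨hc₂, hpm₂, -, hcov₂⟩ := h₂
  obtain ⟨i, hi⟩ := OFAux.core (F₁.image OFAux.idx) (F₂.image OFAux.idx)
    (OFAux.card_image hc₁ hpm₁) (OFAux.cover_image hpm₁ hcov₁)
    (OFAux.card_image hc₂ hpm₂) (OFAux.cover_image hpm₂ hcov₂)
  rw [Finset.mem_inter] at hi
  obtain ⟨M, hM1, hMi⟩ := Finset.mem_image.mp hi.1
  obtain ⟨N, hN2, hNi⟩ := Finset.mem_image.mp hi.2
  refine ⟨M, hM1, ?_⟩
  rw [OFAux.pm_eq (hpm₁ M hM1) (hpm₂ N hN2) (hMi.trans hNi.symm)]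
  exact hN2
end

section
/- There do not exist nonnegative integers n, ℓ_2, ℓ_3, ℓ_4 with ℓ_2 + ℓ_3 + ℓ_4 ≥ 32, 2ℓ_2 + 3ℓ_3 + 4ℓ_4 ≤ 6n, and ℓ_2 + 3ℓ_3 + 6ℓ_4 = C(n,2). -/
/-- Arithmetic core of Lemma 5.1: there are no nonnegative integers `n, ℓ₂, ℓ₃, ℓ₄` with
`ℓ₂ + ℓ₃ + ℓ₄ ≥ 32`, `2ℓ₂ + 3ℓ₃ + 4ℓ₄ ≤ 6n` and `ℓ₂ + 3ℓ₃ + 6ℓ₄ = C(n,2)`. -/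
theorem no_solution_lines_U5 :
    ¬ ∃ n ℓ₂ ℓ₃ ℓ₄ : ℕ, ℓ₂ + ℓ₃ + ℓ₄ ≥ 32 ∧ 2 * ℓ₂ + 3 * ℓ₃ + 4 * ℓ₄ ≤ 6 * n ∧
      ℓ₂ + 3 * ℓ₃ + 6 * ℓ₄ = n.choose 2 := by
  rintro ⟨n, a, b, c, hL, hS, hP⟩
  rcases n with _ | m
  · simp at hP; omega
  · have h2 : 2 * ((m + 1).choose 2) = (m + 1) * m := by
      obtain ⟨r, hr⟩ := Nat.even_mul_succ_self m
      have he : (m + 1) * m = 2 * r := by rw [Nat.mul_comm]; omega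
      rw [Nat.choose_two_right, Nat.add_sub_cancel, he]
      omega
    have h3 : 2 * (a + 3 * b + 6 * c) = (m + 1) * m := by rw [hP]; exact h2
    have key : 8 * (a + b + c) + 2 * (a + 3 * b + 6 * c) ≤ 5 * (2 * a + 3 * b + 4 * c) := by
      omega
    have hz : (m + 1) * m + 256 ≤ 30 * (m + 1) := by omega
    nlinarith [sq_nonneg (2 * (m : ℤ) - 29), hz]
end

section
/- There do not exist nonnegative integers n, ℓ_2, ℓ_3, ℓ_4 and an integer s with 0 ≤ s ≤ 15 such that ℓ_2 + ℓ_3 + ℓ_4 ≥ 26, 2ℓ_2 + 3ℓ_3 + 4ℓ_4 ≤ 5(n−1), and ℓ_2 + 3ℓ_3 + 6ℓ_4 = C(n−1,2) − s. -/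
/-- Arithmetic core of Lemma 5.2: there are no nonnegative integers `n, ℓ₂, ℓ₃, ℓ₄` and
`0 ≤ s ≤ 15` with `ℓ₂ + ℓ₃ + ℓ₄ ≥ 26`, `2ℓ₂ + 3ℓ₃ + 4ℓ₄ ≤ 5(n-1)` and
`ℓ₂ + 3ℓ₃ + 6ℓ₄ = C(n-1,2) - s`. -/
theorem no_solution_lines_avoiding_point :
    ¬ ∃ n ℓ₂ ℓ₃ ℓ₄ s : ℤ, 0 ≤ n ∧ 0 ≤ ℓ₂ ∧ 0 ≤ ℓ₃ ∧ 0 ≤ ℓ₄ ∧ 0 ≤ s ∧ s ≤ 15 ∧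
      ℓ₂ + ℓ₃ + ℓ₄ ≥ 26 ∧ 2 * ℓ₂ + 3 * ℓ₃ + 4 * ℓ₄ ≤ 5 * (n - 1) ∧
      ℓ₂ + 3 * ℓ₃ + 6 * ℓ₄ = (n - 1) * (n - 2) / 2 - s := by
  rintro ⟨n, a, b, c, s, hn, ha, hb, hc, hs0, hs15, hsum, hL, hQ⟩
  have he : Even ((n - 1) * (n - 2)) := by
    have := Int.even_mul_succ_self (n - 2)
    have h : (n - 2) * (n - 2 + 1) = (n - 1) * (n - 2) := by ring
    rwa [h] at this
  have h2 : (n - 1) * (n - 2) / 2 * 2 = (n - 1) * (n - 2) :=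
    Int.ediv_mul_cancel (even_iff_two_dvd.mp he)
  nlinarith [sq_nonneg (n - 14), hQ, hL, hsum, hs15, ha, hb, hc]
end

section
/- Let M be a simple rank-3 matroid with no U_{2,q+2}-minor (q ≥ 2 an integer) that has a line L with exactly q+1 points. Then every line of M intersects L, and consequently the number of lines of M is at most q^2 + q + 1. -/
open Matroid Set

/-- The contraction `M / C`, defined via duality and restriction. -/
def Matroid.contractSet {α : Type*} (M : Matroid α) (C : Set α) : Matroid α :=
  (M✶ ↾ (M.E \ C))✶

/-- `N` is a minor of `M`: a restriction of a contraction of `M`. -/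
def Matroid.IsMinorOf {α : Type*} (N M : Matroid α) : Prop :=
  ∃ C R : Set α, C ⊆ M.E ∧ R ⊆ M.E \ C ∧ N = (M.contractSet C) ↾ R

/-- `M` is (isomorphic to) the uniform matroid `U_{2,n}`: its ground set has `n` elements
and its independent sets are exactly the subsets of the ground set of size at most 2. -/
def Matroid.IsU2 {α : Type*} (M : Matroid α) (n : ℕ) : Prop :=
  M.E.Finite ∧ M.E.ncard = n ∧ ∀ I ⊆ M.E, (M.Indep I ↔ I.ncard ≤ 2)

/-- `M` has no `U_{2,n}`-minor. -/
def Matroid.NoU2Minor {α : Type*} (M : Matroid α) (n : ℕ) : Prop :=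
  ¬ ∃ N : Matroid α, N.IsMinorOf M ∧ N.IsU2 n

/-- `M` is a simple matroid: every subset of the ground set with at most two elements
is independent. -/
def Matroid.IsSimple {α : Type*} (M : Matroid α) : Prop :=
  ∀ e ∈ M.E, ∀ f ∈ M.E, M.Indep {e, f}

/-- `M` has rank 3. -/
def Matroid.RankThree {α : Type*} (M : Matroid α) : Prop :=
  ∃ B : Set α, M.IsBase B ∧ B.ncard = 3

/-- A line of `M` is a rank-2 flat: a flat containing a 2-element independent set but no
3-element independent set. -/
def Matroid.IsLine {α : Type*} (M : Matroid α) (L : Set α) : Prop :=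
  M.IsFlat L ∧ (∃ I ⊆ L, M.Indep I ∧ I.ncard = 2) ∧ ¬ ∃ I ⊆ L, M.Indep I ∧ I.ncard = 3

section Aux

variable {α : Type*} {M : Matroid α}

/-- Independence in a contraction by an independent set. -/
lemma Matroid.contractSet_indep_iff {C : Set α} (hC : M.Indep C) {I : Set α} :
    (M.contractSet C).Indep I ↔ Disjoint I C ∧ M.Indep (I ∪ C) := by
  have hCE : C ⊆ M.E := hC.subset_ground
  have hXE : M.E \ C ⊆ M✶.E := by rw [dual_ground]; exact diff_subset
  rw [Matroid.contractSet, dual_indep_iff_exists']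
  simp only [restrict_ground_eq]
  constructor
  · rintro ⟨hIE, D, hD, hID⟩
    rw [isBase_restrict_iff hXE] at hD
    have hsp : M✶.Spanning (M.E \ C) := by
      have h1 : M✶.Coindep C := by rwa [dual_coindep_iff]
      rw [coindep_iff_compl_spanning (by rwa [dual_ground] : C ⊆ M✶.E)] at h1
      rwa [dual_ground] at h1
    have hDsp : M✶.Spanning D := by
      rw [spanning_iff_closure_eq hD.indep.subset_ground, hD.closure_eq_closure,
        ← spanning_iff_closure_eq]
      exact hsp
    have hDbase : M✶.IsBase D := hD.indep.isBase_of_spanning hDsp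
    have hB : M.IsBase (M.E \ D) := hDbase.compl_isBase_of_dual
    have hsub : I ∪ C ⊆ M.E \ D := by
      refine union_subset ?_ ?_
      · exact fun a ha => ⟨(hIE ha).1, fun haD => hID.ne_of_mem ha haD rfl⟩
      · exact fun a ha => ⟨hCE ha, fun haD => (hD.subset haD).2 ha⟩
    exact ⟨(subset_diff.mp hIE).2, hB.indep.subset hsub⟩
  · rintro ⟨hdisj, hind⟩
    obtain ⟨B, hB, hsub⟩ := hind.exists_isBase_superset
    have hCB : C ⊆ B := subset_union_right.trans hsub
    have hbc : M.IsBasis (B ∩ C) C := by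
      rw [inter_eq_self_of_subset_right hCB]
      exact hC.isBasis_self
    have hdual := hB.compl_inter_isBasis_of_inter_isBasis hbc
    refine ⟨subset_diff.mpr ⟨(subset_union_left.trans hsub).trans hB.subset_ground, hdisj⟩,
      (M.E \ B) ∩ (M.E \ C), (isBase_restrict_iff hXE).mpr hdual, ?_⟩
    exact Disjoint.mono_right inter_subset_left
      (disjoint_sdiff_right.mono_left (subset_union_left.trans hsub))

/-- In a rank-3 matroid, independent sets have at most 3 elements. -/
lemma indep_encard_le (hrank : M.RankThree) {J : Set α} (hJ : M.Indep J) : J.encard ≤ 3 := by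
  obtain ⟨B, hB, hBc⟩ := hrank
  have hBfin : B.Finite := by
    by_contra h
    rw [Set.Infinite.ncard h] at hBc
    omega
  have hBe : B.encard = 3 := by rw [← hBfin.cast_ncard_eq, hBc]; rfl
  obtain ⟨B', hB', hJB⟩ := hJ.exists_isBase_superset
  calc J.encard ≤ B'.encard := encard_mono hJB
    _ = B.encard := hB'.encard_eq_encard_of_isBase hB
    _ = 3 := hBe

/-- If `q+2` points, each seen "independently" from a point `e`, exist, then `M` has a
`U_{2,q+2}` minor. -/
lemma exists_u2 {q : ℕ} (hrank : M.RankThree) {e : α}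
    (he : M.Indep {e}) {S : Set α} (hSE : S ⊆ M.E \ {e})
    (hSfin : S.Finite) (hScard : S.ncard = q + 2)
    (hpairs : ∀ x ∈ S, M.Indep {e, x})
    (htrip : ∀ x ∈ S, ∀ y ∈ S, x ≠ y → M.Indep {e, x, y}) :
    ∃ N : Matroid α, N.IsMinorOf M ∧ N.IsU2 (q + 2) := by
  have heE : e ∈ M.E := he.subset_ground rfl
  refine ⟨(M.contractSet {e}) ↾ S, ⟨{e}, S, by simpa using heE, hSE, rfl⟩, ?_, ?_, ?_⟩
  · simpa using hSfin
  · simpa using hScard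
  · intro I hIS
    rw [restrict_ground_eq] at hIS
    have hIfin : I.Finite := hSfin.subset hIS
    have hIe : e ∉ I := fun hmem => (hSE (hIS hmem)).2 rfl
    rw [restrict_indep_iff, and_iff_left hIS, Matroid.contractSet_indep_iff he,
      and_iff_right (disjoint_singleton_right.mpr hIe)]
    constructor
    · intro hind
      have h3 := indep_encard_le hrank hind
      rw [union_singleton, encard_insert_of_notMem hIe] at h3
      have h2 : I.encard ≤ 2 := by
        have h3' : I.encard + 1 ≤ 2 + 1 := h3.trans_eq (by norm_num)
        exact (WithTop.add_le_add_iff_right (by simp : (1:ℕ∞) ≠ ⊤)).mp h3'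
      rw [← hIfin.cast_ncard_eq] at h2
      exact_mod_cast h2
    · intro hle
      obtain h0 | h1 | h2 : I.ncard = 0 ∨ I.ncard = 1 ∨ I.ncard = 2 := by omega
      · rw [Set.ncard_eq_zero hIfin] at h0
        subst h0; simpa using he
      · obtain ⟨x, rfl⟩ := Set.ncard_eq_one.mp h1
        have hxy : ({x} : Set α) ∪ {e} = {e, x} := by
          simp [Set.pair_comm, Set.union_comm]
        rw [hxy]
        exact hpairs x (hIS rfl)
      · obtain ⟨x, y, hxy, rfl⟩ := Set.ncard_eq_two.mp h2
        rw [Set.union_singleton]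
        exact htrip x (hIS (by simp)) y (hIS (by simp)) hxy

/-- Two distinct points of a line span it. -/
lemma line_closure_pair (hs : M.IsSimple) {L : Set α} (hL : M.IsLine L) {x y : α}
    (hx : x ∈ L) (hy : y ∈ L) (hxy : x ≠ y) : M.closure {x, y} = L := by
  have hLE : L ⊆ M.E := hL.1.subset_ground
  have hind : M.Indep {x, y} := hs x (hLE hx) y (hLE hy)
  have hbasis : M.IsBasis {x, y} L := by
    refine hind.isBasis_of_forall_insert (insert_subset hx (singleton_subset_iff.mpr hy))
      fun e he => ?_
    rw [Dep]
    refine ⟨fun hi => hL.2.2 ⟨insert e {x, y},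
      insert_subset he.1 (insert_subset hx (singleton_subset_iff.mpr hy)), hi, ?_⟩,
      insert_subset (hLE he.1) (insert_subset (hLE hx) (singleton_subset_iff.mpr (hLE hy)))⟩
    rw [Set.ncard_insert_of_notMem he.2 (by simp [Set.finite_singleton]),
      Set.ncard_pair hxy]
  rw [hbasis.closure_eq_closure, hL.1.closure]

/-- A line contained in a line is equal to it. -/
lemma line_eq_of_subset (hs : M.IsSimple) {L1 L2 : Set α} (h1 : M.IsLine L1)
    (h2 : M.IsLine L2) (hsub : L1 ⊆ L2) : L1 = L2 := by
  by_contra hne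
  obtain ⟨z, hzL2, hzL1⟩ := exists_of_ssubset (hsub.ssubset_of_ne hne)
  obtain ⟨I, hIL, hIind, hIc⟩ := h1.2.1
  obtain ⟨x, y, hxy, rfl⟩ := Set.ncard_eq_two.mp hIc
  have hcl : M.closure {x, y} = L1 :=
    line_closure_pair hs h1 (hIL (by simp)) (hIL (by simp)) hxy
  have hz' : z ∉ ({x, y} : Set α) := fun h => hzL1 (hIL h)
  have hzi : M.Indep (insert z {x, y}) := by
    rw [hIind.insert_indep_iff_of_notMem hz', hcl]
    exact ⟨h2.1.subset_ground hzL2, hzL1⟩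
  refine h2.2.2 ⟨insert z {x, y}, insert_subset hzL2 (hIL.trans hsub), hzi, ?_⟩
  rw [Set.ncard_insert_of_notMem hz' (by simp [Set.finite_singleton]), Set.ncard_pair hxy]

/-- There cannot be `q+2` distinct lines through a single point. -/
lemma no_many_lines_through {q : ℕ} (hs : M.IsSimple) (hrank : M.RankThree)
    (hminor : M.NoU2Minor (q + 2)) {x : α} (hx : x ∈ M.E) (T : Finset (Set α))
    (hT : ∀ L' ∈ T, M.IsLine L' ∧ x ∈ L') (hcard : T.card = q + 2) : False := by
  classical
  set g : Set α → α := fun L' => if h : ∃ y ∈ L', y ≠ x then h.choose else x with hg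
  have hgmem : ∀ L' ∈ T, g L' ∈ L' ∧ g L' ≠ x := by
    intro L' hL'
    obtain ⟨hline, hxL'⟩ := hT L' hL'
    obtain ⟨I, hIL, hIind, hIc⟩ := hline.2.1
    obtain ⟨a, b, hab, rfl⟩ := Set.ncard_eq_two.mp hIc
    have hex : ∃ y ∈ L', y ≠ x := by
      by_cases hax : a = x
      · exact ⟨b, hIL (by simp), fun h => hab (by rw [hax, h])⟩
      · exact ⟨a, hIL (by simp), hax⟩
    simp only [hg, dif_pos hex]
    exact ⟨hex.choose_spec.1, hex.choose_spec.2⟩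
  have hgcl : ∀ L' ∈ T, M.closure {x, g L'} = L' := fun L' hL' =>
    line_closure_pair hs (hT L' hL').1 (hT L' hL').2 (hgmem L' hL').1
      (Ne.symm (hgmem L' hL').2)
  have hinj : Set.InjOn g T := by
    intro L1 h1 L2 h2 hgeq
    rw [← hgcl L1 h1, ← hgcl L2 h2, hgeq]
  have hne_line : ∀ L1 ∈ T, ∀ L2 ∈ T, L1 ≠ L2 → g L2 ∉ L1 := by
    intro L1 h1 L2 h2 hne hmem
    refine hne ?_
    have hsub : L2 ⊆ L1 := by
      rw [← hgcl L2 h2]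
      have : ({x, g L2} : Set α) ⊆ L1 :=
        insert_subset (hT L1 h1).2 (singleton_subset_iff.mpr hmem)
      calc M.closure {x, g L2} ⊆ M.closure L1 := M.closure_subset_closure this
        _ = L1 := (hT L1 h1).1.1.closure
    exact (line_eq_of_subset hs (hT L2 h2).1 (hT L1 h1).1 hsub).symm
  set S : Set α := ↑(T.image g) with hS
  have hSE : S ⊆ M.E \ {x} := by
    intro a ha
    simp only [hS, Finset.coe_image, Set.mem_image, Finset.mem_coe] at ha
    obtain ⟨L', hL', rfl⟩ := ha
    exact ⟨(hT L' hL').1.1.subset_ground (hgmem L' hL').1, (hgmem L' hL').2⟩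
  refine hminor (exists_u2 hrank (by simpa using hs x hx x hx) hSE (T.image g).finite_toSet
    ?_ ?_ ?_)
  · rw [Set.ncard_coe_finset, Finset.card_image_of_injOn hinj, hcard]
  · intro a ha
    exact hs x hx a (hSE ha).1
  · intro a ha b hb hab
    simp only [hS, Finset.coe_image, Set.mem_image, Finset.mem_coe] at ha hb
    obtain ⟨L1, h1, rfl⟩ := ha
    obtain ⟨L2, h2, rfl⟩ := hb
    have hL12 : L1 ≠ L2 := fun h => hab (by rw [h])
    have hbn : g L2 ∉ M.closure {x, g L1} := by
      rw [hgcl L1 h1]; exact hne_line L1 h1 L2 h2 hL12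
    have hpi : M.Indep {x, g L1} := hs x hx (g L1) ((hT L1 h1).1.1.subset_ground (hgmem L1 h1).1)
    have hbn' : g L2 ∉ ({x, g L1} : Set α) := by
      simp only [Set.mem_insert_iff, Set.mem_singleton_iff]
      push_neg
      exact ⟨(hgmem L2 h2).2, hab.symm⟩
    have hind : M.Indep (insert (g L2) {x, g L1}) := by
      rw [hpi.insert_indep_iff_of_notMem hbn']
      exact ⟨(hT L2 h2).1.1.subset_ground (hgmem L2 h2).1, hbn⟩
    have heq : ({x, g L1, g L2} : Set α) = insert (g L2) {x, g L1} := by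
      ext t; simp; tauto
    rwa [heq]

end Aux

/-- Lemma 4.1 -/
theorem lines_meet_long_line {α : Type*} (M : Matroid α) (q : ℕ) (hq : 2 ≤ q)
    (hsimple : M.IsSimple) (hrank : M.RankThree) (hminor : M.NoU2Minor (q + 2))
    (L : Set α) (hL : M.IsLine L) (hLcard : L.ncard = q + 1) :
    (∀ L' : Set α, M.IsLine L' → (L' ∩ L).Nonempty) ∧
      {L' : Set α | M.IsLine L'}.ncard ≤ q ^ 2 + q + 1 := by
  classical
  have hLE : L ⊆ M.E := hL.1.subset_ground
  have hLfin : L.Finite := by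
    by_contra h
    rw [Set.Infinite.ncard h] at hLcard
    omega
  have part1 : ∀ L' : Set α, M.IsLine L' → (L' ∩ L).Nonempty := by
    intro L' hL'
    rw [Set.nonempty_iff_ne_empty]
    intro hemp
    have hdisj : ∀ a, a ∈ L' → a ∉ L := fun a ha hb =>
      (Set.eq_empty_iff_forall_notMem.mp hemp a) ⟨ha, hb⟩
    obtain ⟨I, hIL, hIind, hIc⟩ := hL'.2.1
    obtain ⟨x, y, hxy, rfl⟩ := Set.ncard_eq_two.mp hIc
    have hxL' : x ∈ L' := hIL (by simp)
    have hyL' : y ∈ L' := hIL (by simp)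
    have hxE : x ∈ M.E := hL'.1.subset_ground hxL'
    have hyE : y ∈ M.E := hL'.1.subset_ground hyL'
    have hxL : x ∉ L := hdisj x hxL'
    have hyL : y ∉ L := hdisj y hyL'
    have hclL' : M.closure {x, y} = L' := line_closure_pair hsimple hL' hxL' hyL' hxy
    set S : Set α := insert y L with hS
    have hSE : S ⊆ M.E \ {x} := by
      rintro a (rfl | ha)
      · exact ⟨hyE, Ne.symm hxy⟩
      · exact ⟨hLE ha, fun h => hxL (h ▸ ha)⟩
    have hScard : S.ncard = q + 2 := by
      rw [hS, Set.ncard_insert_of_notMem hyL hLfin, hLcard]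
    have htrip : ∀ a ∈ S, ∀ b ∈ S, a ≠ b → M.Indep {x, a, b} := by
      have hLcase : ∀ b ∈ L, M.Indep (insert b {x, y}) := by
        intro b hbL
        have hbn : b ∉ ({x, y} : Set α) := by
          simp only [Set.mem_insert_iff, Set.mem_singleton_iff]
          push_neg
          exact ⟨fun h => hxL (h ▸ hbL), fun h => hyL (h ▸ hbL)⟩
        rw [hIind.insert_indep_iff_of_notMem hbn, hclL']
        exact ⟨hLE hbL, fun h => hdisj b h hbL⟩
      intro a ha b hb hab
      simp only [hS, Set.mem_insert_iff] at ha hb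
      rcases ha with ha | haL
      · subst ha
        rcases hb with hb | hbL
        · exact absurd hb.symm hab
        · have heq : ({x, a, b} : Set α) = insert b {x, a} := by ext t; simp; tauto
          rw [heq]
          exact hLcase b hbL
      · rcases hb with hb | hbL
        · subst hb
          have heq : ({x, a, b} : Set α) = insert a {x, b} := by ext t; simp; tauto
          rw [heq]
          exact hLcase a haL
        · have hpi : M.Indep {a, b} := hsimple a (hLE haL) b (hLE hbL)
          have hcl : M.closure {a, b} = L := line_closure_pair hsimple hL haL hbL hab
          have hxn : x ∉ ({a, b} : Set α) := by
            simp only [Set.mem_insert_iff, Set.mem_singleton_iff]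
            push_neg
            exact ⟨fun h => hxL (h ▸ haL), fun h => hxL (h ▸ hbL)⟩
          rw [show ({x, a, b} : Set α) = insert x {a, b} from rfl,
            hpi.insert_indep_iff_of_notMem hxn, hcl]
          exact ⟨hxE, hxL⟩
    exact hminor (exists_u2 hrank (by simpa using hsimple x hxE x hxE) hSE
      (hLfin.insert y) hScard (fun a ha => hsimple x hxE a (hSE ha).1) htrip)
  refine ⟨part1, ?_⟩
  by_cases hfin : {L' : Set α | M.IsLine L'}.Finite
  · set Ls : Finset (Set α) := hfin.toFinset with hLs
    set Lfs : Finset α := hLfin.toFinset with hLfs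
    have hkey : ∀ x ∈ L, (Ls.filter (fun L' => L' ≠ L ∧ x ∈ L')).card ≤ q := by
      intro x hx
      by_contra hcon
      push_neg at hcon
      obtain ⟨T', hT'sub, hT'card⟩ := Finset.exists_subset_card_eq hcon
      have hLT' : L ∉ T' := fun h => ((Finset.mem_filter.mp (hT'sub h)).2.1) rfl
      refine no_many_lines_through hsimple hrank hminor (hLE hx) (insert L T') ?_ ?_
      · intro L'' hL''
        rcases Finset.mem_insert.mp hL'' with rfl | h
        · exact ⟨hL, hx⟩
        · obtain ⟨hmem, _, hxm⟩ := Finset.mem_filter.mp (hT'sub h)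
          exact ⟨hfin.mem_toFinset.mp hmem, hxm⟩
      · rw [Finset.card_insert_of_notMem hLT', hT'card]
    have hsub : Ls ⊆ insert L (Lfs.biUnion fun x => Ls.filter (fun L' => L' ≠ L ∧ x ∈ L')) := by
      intro L'' hmem
      have hline : M.IsLine L'' := hfin.mem_toFinset.mp hmem
      by_cases hEL : L'' = L
      · exact Finset.mem_insert.mpr (Or.inl hEL)
      · obtain ⟨x, hxL'', hxL⟩ := part1 L'' hline
        refine Finset.mem_insert.mpr (Or.inr (Finset.mem_biUnion.mpr
          ⟨x, hLfin.mem_toFinset.mpr hxL, Finset.mem_filter.mpr ⟨hmem, hEL, hxL''⟩⟩))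
    have hLfscard : Lfs.card = q + 1 := by
      rw [hLfs, ← Set.ncard_eq_toFinset_card L hLfin, hLcard]
    calc {L' : Set α | M.IsLine L'}.ncard = Ls.card := Set.ncard_eq_toFinset_card _ hfin
      _ ≤ (insert L (Lfs.biUnion fun x => Ls.filter (fun L' => L' ≠ L ∧ x ∈ L'))).card :=
        Finset.card_le_card hsub
      _ ≤ (Lfs.biUnion fun x => Ls.filter (fun L' => L' ≠ L ∧ x ∈ L')).card + 1 :=
        Finset.card_insert_le _ _
      _ ≤ (∑ x ∈ Lfs, (Ls.filter (fun L' => L' ≠ L ∧ x ∈ L')).card) + 1 := by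
        exact Nat.add_le_add_right (Finset.card_biUnion_le) 1
      _ ≤ (q + 1) * q + 1 := by
        refine Nat.add_le_add_right ?_ 1
        calc ∑ x ∈ Lfs, (Ls.filter (fun L' => L' ≠ L ∧ x ∈ L')).card
            ≤ Lfs.card * q := by
              rw [← smul_eq_mul]
              exact Finset.sum_le_card_nsmul _ _ q
                (fun x hx => hkey x (hLfin.mem_toFinset.mp hx))
          _ = (q + 1) * q := by rw [hLfscard]
      _ ≤ q ^ 2 + q + 1 := by nlinarith
  · rw [Set.Infinite.ncard hfin]
    omega
end
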